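/- arXiv:2001.07538 — 5 statements merged into one kernel-verified Lean document; each statement's English description precedes it below -/
import Mathlib

section
/- Let (X,d) be a metric space and T : X → X a map such that for some k ∈ ℕ and some q ∈ (0,1) the k-th iterate T^k is a q-contraction of (X,d). Define d_k(x,y) := d(x,y) + q^{-1/k} d(Tx,Ty) + ⋯ + q^{-(k-1)/k} d(T^{k-1}x,T^{k-1}y). Then d_k is a metric on X and T is a q^{1/k}-contraction of (X,d_k), i.e. d_k(Tx,Ty) ≤ q^{1/k} d_k(x,y) for all x,y ∈ X. -/
/-- The Bielecki-type renormed distance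
`d_k(x,y) := ∑_{j=0}^{k-1} q^{-j/k} d(T^j x, T^j y)`. -/
noncomputable def bieleckiDist {X : Type*} [MetricSpace X] (T : X → X) (k : ℕ) (q : ℝ)
    (x y : X) : ℝ :=
  ∑ j ∈ Finset.range k, q ^ (-(j : ℝ) / (k : ℝ)) * dist (T^[j] x) (T^[j] y)

/-!
Shifting the index of `d_k` by one gives `d_k(Tx,Ty) = q^{1/k} ∑_{j=1}^{k} q^{-j/k} d(T^j x, T^j y)`.
This differs from `q^{1/k} d_k(x,y)` only in trading the term `d(x,y)` for
`q^{-1} d(T^k x, T^k y)`, which is no larger because `T^k` is a `q`-contraction.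
The metric axioms hold termwise, and the `j = 0` term `d(x,y)` makes `d_k` definite.
-/

open Finset

theorem Finset.sum_range_succ_le_sum_range_of_le {M : Type*} [AddCommMonoid M] [PartialOrder M]
    [IsOrderedCancelAddMonoid M] {f : ℕ → M} {n : ℕ} (h : f n ≤ f 0) :
    ∑ i ∈ range n, f (i + 1) ≤ ∑ i ∈ range n, f i := by
  have key : ∑ i ∈ range n, f (i + 1) + f 0 ≤ ∑ i ∈ range n, f i + f 0 := by
    rw [← sum_range_succ', sum_range_succ]
    gcongr
  exact le_of_add_le_add_right key

section Bielecki

variable {X : Type*} [MetricSpace X] {T : X → X} {k : ℕ} {q : ℝ}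

theorem bieleckiDist_comm (x y : X) : bieleckiDist T k q x y = bieleckiDist T k q y x := by
  simp only [bieleckiDist, dist_comm]

theorem bieleckiDist_self (x : X) : bieleckiDist T k q x x = 0 := by
  simp [bieleckiDist]

theorem bieleckiDist_triangle (hq : 0 ≤ q) (x y z : X) :
    bieleckiDist T k q x z ≤ bieleckiDist T k q x y + bieleckiDist T k q y z := by
  rw [bieleckiDist, bieleckiDist, bieleckiDist, ← sum_add_distrib]
  gcongr with j
  rw [← mul_add]
  exact mul_le_mul_of_nonneg_left (dist_triangle _ _ _) (Real.rpow_nonneg hq _)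

theorem dist_le_bieleckiDist (hq : 0 ≤ q) (hk : 1 ≤ k) (x y : X) :
    dist x y ≤ bieleckiDist T k q x y := by
  have h0 := single_le_sum (f := fun j : ℕ => q ^ (-(j : ℝ) / (k : ℝ)) * dist (T^[j] x) (T^[j] y))
    (fun j _ => mul_nonneg (Real.rpow_nonneg hq _) dist_nonneg) (mem_range.2 hk)
  simpa [bieleckiDist] using h0

theorem bieleckiDist_eq_zero_iff (hq : 0 ≤ q) (hk : 1 ≤ k) {x y : X} :
    bieleckiDist T k q x y = 0 ↔ x = y := by
  refine ⟨fun h => dist_le_zero.1 ?_, fun h => h ▸ bieleckiDist_self x⟩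
  exact h ▸ dist_le_bieleckiDist hq hk x y

theorem bieleckiDist_apply_eq (hq : 0 < q) (x y : X) :
    bieleckiDist T k q (T x) (T y) = q ^ ((1 : ℝ) / k) *
      ∑ j ∈ range k, q ^ (-((j + 1 : ℕ) : ℝ) / k) * dist (T^[j + 1] x) (T^[j + 1] y) := by
  rw [bieleckiDist, mul_sum]
  refine sum_congr rfl fun j _ => ?_
  rw [← mul_assoc, ← Real.rpow_add hq, ← add_div, Function.iterate_succ_apply,
    Function.iterate_succ_apply]
  push_cast
  ring_nf

theorem bieleckiDist_apply_le (hq : 0 < q)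
    (hcontr : ∀ x y : X, dist (T^[k] x) (T^[k] y) ≤ q * dist x y) (x y : X) :
    bieleckiDist T k q (T x) (T y) ≤ q ^ ((1 : ℝ) / k) * bieleckiDist T k q x y := by
  obtain rfl | hk := eq_or_ne k 0
  · simp [bieleckiDist]
  rw [bieleckiDist_apply_eq hq, bieleckiDist]
  refine mul_le_mul_of_nonneg_left ?_ (Real.rpow_nonneg hq.le _)
  refine sum_range_succ_le_sum_range_of_le
    (f := fun j : ℕ => q ^ (-(j : ℝ) / k) * dist (T^[j] x) (T^[j] y)) ?_
  have hexp : -(k : ℝ) / k = -1 := by field_simp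
  simp only [Nat.cast_zero, neg_zero, zero_div, Real.rpow_zero, one_mul,
    Function.iterate_zero_apply, hexp, Real.rpow_neg_one]
  calc q⁻¹ * dist (T^[k] x) (T^[k] y) ≤ q⁻¹ * (q * dist x y) := by gcongr; exact hcontr x y
    _ = dist x y := by field_simp

end Bielecki

theorem bielecki_renorming_general {X : Type*} [MetricSpace X] (T : X → X) (k : ℕ) (hk : 1 ≤ k)
    (q : ℝ) (hq0 : 0 < q)
    (hcontr : ∀ x y : X, dist (T^[k] x) (T^[k] y) ≤ q * dist x y) :
    (∀ x y : X, bieleckiDist T k q x y = 0 ↔ x = y) ∧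
    (∀ x y : X, bieleckiDist T k q x y = bieleckiDist T k q y x) ∧
    (∀ x y z : X, bieleckiDist T k q x z ≤ bieleckiDist T k q x y + bieleckiDist T k q y z) ∧
    (∀ x y : X, bieleckiDist T k q (T x) (T y) ≤ q ^ ((1 : ℝ) / (k : ℝ)) * bieleckiDist T k q x y) :=
  ⟨fun _ _ => bieleckiDist_eq_zero_iff hq0.le hk, bieleckiDist_comm, bieleckiDist_triangle hq0.le,
    bieleckiDist_apply_le hq0 hcontr⟩

/-- If some iterate `T^k` of `T : X → X` is a `q`-contraction of the metric space `(X,d)`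
with `0 < q < 1`, then `d_k` is a metric on `X` and `T` is a `q^(1/k)`-contraction of
`(X, d_k)`. -/
theorem bielecki_renorming {X : Type*} [MetricSpace X] (T : X → X) (k : ℕ) (hk : 1 ≤ k)
    (q : ℝ) (hq0 : 0 < q) (hq1 : q < 1)
    (hcontr : ∀ x y : X, dist (T^[k] x) (T^[k] y) ≤ q * dist x y) :
    (∀ x y : X, bieleckiDist T k q x y = 0 ↔ x = y) ∧
    (∀ x y : X, bieleckiDist T k q x y = bieleckiDist T k q y x) ∧
    (∀ x y z : X, bieleckiDist T k q x z ≤ bieleckiDist T k q x y + bieleckiDist T k q y z) ∧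
    (∀ x y : X, bieleckiDist T k q (T x) (T y) ≤ q ^ ((1 : ℝ) / (k : ℝ)) * bieleckiDist T k q x y) :=
  bielecki_renorming_general T k hk q hq0 hcontr
end

section
/- Let X be a nonempty set, B a nonempty set, 𝓕 ⊆ B^X a family of maps from X to B, T : 𝓕 → 𝓕, and 𝓗 a family of subsets of X. Assume: (i) 𝓗 covers X; (ii) for all H₁,H₂ ∈ 𝓗, the union of all H ∈ 𝓗 with H ⊆ H₁ ∩ H₂ equals H₁ ∩ H₂; (iii) if a map x : X → B satisfies x↾H ∈ 𝓕_H for every H ∈ 𝓗, then x ∈ 𝓕; (iv) T is restrictable to 𝓕_H for every H ∈ 𝓗; (v) for every H ∈ 𝓗 the natural restriction T_H has a unique fixed point x_H ∈ 𝓕_H. Then T has a unique fixed point in 𝓕. -/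
/-!
By (ii) and the uniqueness in (v), the local fixed points `x_H` agree on every overlap
`H₁ ∩ H₂`, so they glue along the cover (i) to a map `x`. By (iii) `x ∈ F`, and by (iv)
`T x` agrees with `T x_H = x_H` on each `H`, so `T x = x`. Any two global fixed points are
local fixed points on every `H`, hence agree on every `H`, hence everywhere.
-/

open Set

namespace Set

variable {X B : Type*}

theorem eqOn_sUnion {f g : X → B} {𝒮 : Set (Set X)} (h : ∀ H ∈ 𝒮, EqOn f g H) :
    EqOn f g (⋃₀ 𝒮) := by
  rintro t ⟨H, hH, ht⟩
  exact h H hH ht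

theorem eq_of_eqOn_of_sUnion_eq_univ {f g : X → B} {𝒮 : Set (Set X)} (hcover : ⋃₀ 𝒮 = univ)
    (h : ∀ H ∈ 𝒮, EqOn f g H) : f = g :=
  eqOn_univ f g |>.mp (hcover ▸ eqOn_sUnion h)

theorem exists_eqOn_of_eqOn_inter {𝒮 : Set (Set X)} (hcover : ⋃₀ 𝒮 = univ)
    (g : 𝒮 → X → B) (hg : ∀ H₁ H₂ : 𝒮, EqOn (g H₁) (g H₂) (H₁ ∩ H₂)) :
    ∃ x : X → B, ∀ H : 𝒮, EqOn x (g H) H :=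
  ⟨liftCover (fun H : 𝒮 => (H : Set X)) (fun H t => g H t)
      (fun H₁ H₂ _ h₁ h₂ => hg H₁ H₂ (mem_inter h₁ h₂)) (by rwa [← sUnion_eq_iUnion]),
    fun _ _ ht => liftCover_of_mem ht⟩

end Set

section LocalFixedPoints

variable {X B : Type*} {F : Set (X → B)} {T : (X → B) → (X → B)} {HH : Set (Set X)}

theorem eqOn_inter_of_fixedOn
    (hinter : ∀ H₁ ∈ HH, ∀ H₂ ∈ HH, ⋃₀ {H ∈ HH | H ⊆ H₁ ∩ H₂} = H₁ ∩ H₂)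
    (huniq : ∀ H ∈ HH, ∀ x ∈ F, ∀ y ∈ F, EqOn (T x) x H → EqOn (T y) y H → EqOn x y H)
    {H₁ H₂ : Set X} (h₁ : H₁ ∈ HH) (h₂ : H₂ ∈ HH) {x y : X → B} (hx : x ∈ F) (hy : y ∈ F)
    (hTx : EqOn (T x) x H₁) (hTy : EqOn (T y) y H₂) : EqOn x y (H₁ ∩ H₂) := by
  rw [← hinter H₁ h₁ H₂ h₂]
  exact eqOn_sUnion fun H ⟨hH, hsub⟩ => huniq H hH x hx y hy
    (hTx.mono (hsub.trans inter_subset_left)) (hTy.mono (hsub.trans inter_subset_right))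

theorem fixed_of_eqOn_fixedOn (hcover : ⋃₀ HH = univ)
    (hrestr : ∀ H ∈ HH, ∀ x ∈ F, ∀ y ∈ F, EqOn x y H → EqOn (T x) (T y) H)
    {x : X → B} (hx : x ∈ F) (hloc : ∀ H ∈ HH, ∃ y ∈ F, EqOn (T y) y H ∧ EqOn x y H) :
    T x = x :=
  eq_of_eqOn_of_sUnion_eq_univ hcover fun H hH => by
    obtain ⟨y, hy, hTy, hxy⟩ := hloc H hH
    exact (hrestr H hH x hx y hy hxy).trans (hTy.trans hxy.symm)

theorem eq_of_fixed_of_unique_fixedOn (hcover : ⋃₀ HH = univ)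
    (huniq : ∀ H ∈ HH, ∀ x ∈ F, ∀ y ∈ F, EqOn (T x) x H → EqOn (T y) y H → EqOn x y H)
    {x y : X → B} (hx : x ∈ F) (hy : y ∈ F) (hTx : T x = x) (hTy : T y = y) : x = y :=
  eq_of_eqOn_of_sUnion_eq_univ hcover fun H hH =>
    huniq H hH x hx y hy (fun _ _ => congrFun hTx _) (fun _ _ => congrFun hTy _)

end LocalFixedPoints

theorem extension_lemma_unique_fixed_point_general {X B : Type*}
    (F : Set (X → B)) (T : (X → B) → (X → B))
    (HH : Set (Set X))
    -- (i) `HH` is a cover of `X`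
    (hcover : ⋃₀ HH = Set.univ)
    -- (ii) members of `HH` contained in `H₁ ∩ H₂` cover `H₁ ∩ H₂`
    (hinter : ∀ H₁ ∈ HH, ∀ H₂ ∈ HH, ⋃₀ {H ∈ HH | H ⊆ H₁ ∩ H₂} = H₁ ∩ H₂)
    -- (iii) if `x↾H ∈ F_H` for all `H ∈ HH`, then `x ∈ F`
    (hglue : ∀ x : X → B, (∀ H ∈ HH, ∃ u ∈ F, Set.EqOn x u H) → x ∈ F)
    -- (iv) `T` is restrictable to `F_H` for all `H ∈ HH`
    (hrestr : ∀ H ∈ HH, ∀ x ∈ F, ∀ y ∈ F, Set.EqOn x y H → Set.EqOn (T x) (T y) H)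
    -- (v) for each `H ∈ HH`, the natural restriction `T_H` has a unique fixed point in `F_H`
    (hfix : ∀ H ∈ HH,
      (∃ x ∈ F, Set.EqOn (T x) x H) ∧
      (∀ x ∈ F, ∀ y ∈ F, Set.EqOn (T x) x H → Set.EqOn (T y) y H → Set.EqOn x y H)) :
    ∃! x : X → B, x ∈ F ∧ T x = x := by
  choose xH hxHF hxHfix using fun H : HH => (hfix H H.2).1
  have huniq := fun H hH => (hfix H hH).2
  obtain ⟨x, hx⟩ := exists_eqOn_of_eqOn_inter hcover xH fun H₁ H₂ =>
    eqOn_inter_of_fixedOn hinter huniq H₁.2 H₂.2 (hxHF H₁) (hxHF H₂) (hxHfix H₁) (hxHfix H₂)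
  have hlocal : ∀ H ∈ HH, ∃ y ∈ F, EqOn (T y) y H ∧ EqOn x y H := fun H hH =>
    ⟨xH ⟨H, hH⟩, hxHF _, hxHfix _, hx _⟩
  have hxF : x ∈ F := hglue x fun H hH => ⟨xH ⟨H, hH⟩, hxHF _, hx _⟩
  have hTx : T x = x := fixed_of_eqOn_fixedOn hcover hrestr hxF hlocal
  exact ⟨x, ⟨hxF, hTx⟩, fun y ⟨hyF, hTy⟩ =>
    eq_of_fixed_of_unique_fixedOn hcover huniq hyF hxF hTy hTx⟩

/-- Extension lemma: local unique fixed point properties glue to a global one.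
Here `F ⊆ B^X` is a family of maps, `T` maps `F` into itself, and `HH` is a family of
subsets of `X` satisfying the covering and compatibility conditions (i)–(v).
Membership of a restriction `x↾H` in `F_H = {u↾H : u ∈ F}` is expressed as
`∃ u ∈ F, Set.EqOn x u H`; restrictability and the fixed point conditions for the
natural restrictions `T_H` are expressed via `Set.EqOn` accordingly. -/
theorem extension_lemma_unique_fixed_point {X B : Type*} [Nonempty X] [Nonempty B]
    (F : Set (X → B)) (T : (X → B) → (X → B)) (hT : ∀ x ∈ F, T x ∈ F)
    (HH : Set (Set X))
    -- (i) `HH` is a cover of `X`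
    (hcover : ⋃₀ HH = Set.univ)
    -- (ii) members of `HH` contained in `H₁ ∩ H₂` cover `H₁ ∩ H₂`
    (hinter : ∀ H₁ ∈ HH, ∀ H₂ ∈ HH, ⋃₀ {H ∈ HH | H ⊆ H₁ ∩ H₂} = H₁ ∩ H₂)
    -- (iii) if `x↾H ∈ F_H` for all `H ∈ HH`, then `x ∈ F`
    (hglue : ∀ x : X → B, (∀ H ∈ HH, ∃ u ∈ F, Set.EqOn x u H) → x ∈ F)
    -- (iv) `T` is restrictable to `F_H` for all `H ∈ HH`
    (hrestr : ∀ H ∈ HH, ∀ x ∈ F, ∀ y ∈ F, Set.EqOn x y H → Set.EqOn (T x) (T y) H)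
    -- (v) for each `H ∈ HH`, the natural restriction `T_H` has a unique fixed point in `F_H`
    (hfix : ∀ H ∈ HH,
      (∃ x ∈ F, Set.EqOn (T x) x H) ∧
      (∀ x ∈ F, ∀ y ∈ F, Set.EqOn (T x) x H → Set.EqOn (T y) y H → Set.EqOn x y H)) :
    ∃! x : X → B, x ∈ F ∧ T x = x :=
  extension_lemma_unique_fixed_point_general F T HH hcover hinter hglue hrestr hfix
end

section
/- Let X be a topological space with a Radon measure μ, and let H ⊆ X² be a reflexive, transitive, compact-valued, strongly surjective, and μ-continuous relation. Let L₀ ≥ 0 and t₀ ∈ X satisfy L₀ · ρ_{H,μ}(t₀) < 1. Then the integral equation ℓ(t) = 1 + L₀ ∫_{H(t)} ℓ(s) dμ(s) has a continuous, everywhere positive solution ℓ : H(t₀) → ℝ₊ (in fact ℓ ≥ 1). -/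
open MeasureTheory
open scoped ENNReal

/-- The set-valued map induced by a relation `H ⊆ X²`: `H(t) = {s | (t,s) ∈ H}`. -/
def relImg {X : Type*} (H : Set (X × X)) (t : X) : Set X := {s | (t, s) ∈ H}

/-- The iterates `Λ_{H,μ}^k 𝟏` of the core map `(Λ_{H,μ} x)(t) = ∫_{H(t)} x dμ`
applied to the constant function `𝟏`. -/
noncomputable def coreIter {X : Type*} [MeasurableSpace X] (μ : Measure X)
    (H : Set (X × X)) : ℕ → X → ℝ
  | 0 => fun _ => 1
  | (k + 1) => fun t => ∫ s in relImg H t, coreIter μ H k s ∂μ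

/-- The spectral radius function of the core map `Λ_{H,μ}`:
`ρ_{H,μ}(t) = limsup_{k→∞} ((Λ_{H,μ}^k 𝟏)(t))^{1/k}`. -/
noncomputable def specRad {X : Type*} [MeasurableSpace X] (μ : Measure X)
    (H : Set (X × X)) (t : X) : ℝ :=
  Filter.limsup (fun k : ℕ => (coreIter μ H k t) ^ ((1 : ℝ) / (k : ℝ))) Filter.atTop

/-!
The solution is the Neumann series `ℓ = ∑ₖ L₀ᵏ Λᵏ𝟏`. By transitivity `H(t) ⊆ H(t₀)` for
`t ∈ H(t₀)`, so on `H(t₀)` every iterate `Λᵏ𝟏` is dominated by its value at `t₀`; these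
values grow at most like `μ(H(t₀))ᵏ`, and the root test turns `L₀ ρ(t₀) < 1` into
summability of `∑ₖ L₀ᵏ (Λᵏ𝟏)(t₀)`. The Weierstrass M-test then gives uniform convergence
on `H(t₀)`. Strong surjectivity and `μ`-continuity make each `Λᵏ𝟏` continuous (the
integrals over `H(t)` and `H(t')` differ by at most a bound times `μ(H(t) ∆ H(t'))`), so
`ℓ` is continuous, and integrating the series term by term gives the equation.
-/

open Filter Topology

section SetIntegral

variable {X : Type*} [MeasurableSpace X] {μ : Measure X}

theorem setIntegral_le_setIntegral_add_mul_measureReal_diff {f : X → ℝ} (hf0 : 0 ≤ f)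
    {A B : Set X} {C : ℝ} (hfB : IntegrableOn f B μ) (hfAB : IntegrableOn f (A \ B) μ)
    (hC : ∀ x ∈ A \ B, f x ≤ C) (hAB : μ (A \ B) < ∞) :
    ∫ x in A, f x ∂μ ≤ ∫ x in B, f x ∂μ + C * μ.real (A \ B) := by
  have hrestrict : μ.restrict A ≤ μ.restrict B + μ.restrict (A \ B) :=
    (Measure.restrict_mono (by simp) le_rfl).trans (Measure.restrict_union_le B (A \ B))
  have hdiff : ∫ x in A \ B, f x ∂μ ≤ C * μ.real (A \ B) :=
    (Real.le_norm_self _).trans <| norm_setIntegral_le_of_norm_le_const hAB fun x hx => by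
      rw [Real.norm_of_nonneg (hf0 x)]; exact hC x hx
  calc ∫ x in A, f x ∂μ ≤ ∫ x, f x ∂(μ.restrict B + μ.restrict (A \ B)) :=
        integral_mono_measure hrestrict (Eventually.of_forall hf0)
          (Integrable.add_measure hfB hfAB)
    _ = ∫ x in B, f x ∂μ + ∫ x in A \ B, f x ∂μ := integral_add_measure hfB hfAB
    _ ≤ ∫ x in B, f x ∂μ + C * μ.real (A \ B) := by gcongr

theorem abs_setIntegral_sub_setIntegral_le {f : X → ℝ} (hf0 : 0 ≤ f) {A B S : Set X} {C : ℝ}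
    (hC0 : 0 ≤ C) (hC : ∀ x ∈ S, f x ≤ C) (hS : μ S < ∞) (hf : IntegrableOn f S μ)
    (hA : A ⊆ S) (hB : B ⊆ S) :
    |∫ x in A, f x ∂μ - ∫ x in B, f x ∂μ| ≤ C * μ.real (symmDiff A B) := by
  have hfin : μ (symmDiff A B) < ∞ :=
    (measure_mono (symmDiff_le_sup.trans (sup_le hA hB))).trans_lt hS
  have h₁ := setIntegral_le_setIntegral_add_mul_measureReal_diff hf0 (hf.mono_set hB)
    (hf.mono_set (Set.sdiff_subset.trans hA)) (fun x hx => hC x (hA hx.1))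
    ((measure_mono Set.sdiff_subset).trans_lt (hS.trans_le' (measure_mono hA)))
  have h₂ := setIntegral_le_setIntegral_add_mul_measureReal_diff hf0 (hf.mono_set hA)
    (hf.mono_set (Set.sdiff_subset.trans hB)) (fun x hx => hC x (hB hx.1))
    ((measure_mono Set.sdiff_subset).trans_lt (hS.trans_le' (measure_mono hB)))
  have hAB : μ.real (A \ B) ≤ μ.real (symmDiff A B) :=
    measureReal_mono le_sup_left hfin.ne
  have hBA : μ.real (B \ A) ≤ μ.real (symmDiff A B) :=
    measureReal_mono le_sup_right hfin.ne
  rw [abs_sub_le_iff]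
  constructor <;>
    nlinarith [mul_le_mul_of_nonneg_left hAB hC0, mul_le_mul_of_nonneg_left hBA hC0]

theorem setIntegral_tsum_of_norm_le {E : Type*} [NormedAddCommGroup E] [NormedSpace ℝ E]
    {s : Set X} {F : ℕ → X → E} {u : ℕ → ℝ} (hs : μ s < ∞)
    (hF : ∀ k, IntegrableOn (F k) s μ) (hu : Summable u) (hFu : ∀ k, ∀ x ∈ s, ‖F k x‖ ≤ u k) :
    ∫ x in s, ∑' k, F k x ∂μ = ∑' k, ∫ x in s, F k x ∂μ := by
  refine (integral_tsum_of_summable_integral_norm hF ?_).symm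
  refine (hu.mul_right (μ.real s)).of_nonneg_of_le
    (fun k => integral_nonneg fun _ => norm_nonneg _) fun k => ?_
  exact (Real.le_norm_self _).trans <| norm_setIntegral_le_of_norm_le_const hs fun x hx => by
    simpa using hFu k x hx

end SetIntegral

section Continuity

variable {X : Type*} [TopologicalSpace X] [MeasurableSpace X] [OpensMeasurableSpace X]
  {μ : Measure X} [IsFiniteMeasureOnCompacts μ]

-- Compact sets need not be measurable here, since `X` is not assumed to be Hausdorff.
theorem Continuous.integrableOn_isCompact {f : X → ℝ} (hf : Continuous f) {K : Set X}
    (hK : IsCompact K) : IntegrableOn f K μ := by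
  obtain ⟨C, hC⟩ := hK.exists_bound_of_continuousOn hf.continuousOn
  have hbound : MeasurableSet {x | ‖f x‖ ≤ C} :=
    measurableSet_le hf.norm.measurable measurable_const
  exact Measure.integrableOn_of_bounded hK.measure_ne_top hf.aestronglyMeasurable
    (ae_restrict_of_ae_restrict_of_subset hC (ae_restrict_of_forall_mem hbound fun _ h => h))

theorem continuousAt_setIntegral_of_tendsto_measure_symmDiff {Y : Type*} [TopologicalSpace Y]
    {F : Y → Set X} {y : Y} {S : Set X} {f : X → ℝ}
    (hf : Continuous f) (hf0 : 0 ≤ f) (hS : IsCompact S) (hFS : ∀ᶠ z in 𝓝 y, F z ⊆ S)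
    (hF : Tendsto (fun z => μ (symmDiff (F z) (F y))) (𝓝 y) (𝓝 0)) :
    ContinuousAt (fun z => ∫ x in F z, f x ∂μ) y := by
  obtain ⟨C, hC⟩ := hS.exists_bound_of_continuousOn hf.continuousOn
  have hbound : ∀ x ∈ S, f x ≤ max C 0 := fun x hx =>
    (Real.le_norm_self _).trans ((hC x hx).trans (le_max_left _ _))
  have hlim : Tendsto (fun z => max C 0 * μ.real (symmDiff (F z) (F y))) (𝓝 y) (𝓝 0) := by
    simpa [Measure.real] using
      ((ENNReal.tendsto_toReal ENNReal.zero_ne_top).comp hF).const_mul (max C 0)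
  rw [ContinuousAt, tendsto_iff_dist_tendsto_zero]
  refine squeeze_zero' (Eventually.of_forall fun _ => dist_nonneg) ?_ hlim
  filter_upwards [hFS] with z hz
  exact abs_setIntegral_sub_setIntegral_le hf0 (le_max_right _ _) hbound hS.measure_lt_top
    (hf.integrableOn_isCompact hS) hz (mem_of_mem_nhds hFS)

end Continuity

theorem isBoundedUnder_rpow_one_div_of_le_pow {a : ℕ → ℝ} {m : ℝ} (ha : ∀ k, 0 ≤ a k)
    (hm : 0 ≤ m) (h : ∀ k, a k ≤ m ^ k) :
    IsBoundedUnder (· ≤ ·) atTop (fun k : ℕ => a k ^ ((1 : ℝ) / k)) := by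
  refine isBoundedUnder_of_eventually_le (a := m) ?_
  filter_upwards [eventually_ne_atTop 0] with k hk
  calc a k ^ ((1 : ℝ) / k) ≤ (m ^ k) ^ ((1 : ℝ) / k) :=
        Real.rpow_le_rpow (ha k) (h k) (by positivity)
    _ = m := by rw [one_div, Real.pow_rpow_inv_natCast hm hk]

theorem summable_pow_mul_of_mul_limsup_lt_one {a : ℕ → ℝ} {L : ℝ} (ha : ∀ k, 0 ≤ a k)
    (hL : 0 ≤ L) (hbdd : IsBoundedUnder (· ≤ ·) atTop (fun k : ℕ => a k ^ ((1 : ℝ) / k)))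
    (h : L * limsup (fun k : ℕ => a k ^ ((1 : ℝ) / k)) atTop < 1) :
    Summable fun k => L ^ k * a k := by
  set ρ := limsup (fun k : ℕ => a k ^ ((1 : ℝ) / k)) atTop
  have hnhds : ∀ᶠ c in 𝓝 ρ, L * c < 1 :=
    (continuous_const.mul continuous_id).continuousAt.eventually_lt continuousAt_const h
  obtain ⟨c, hLc, hρc⟩ := ((hnhds.filter_mono (nhdsWithin_le_nhds (s := Set.Ioi ρ))).and
    (self_mem_nhdsWithin (s := Set.Ioi ρ))).exists
  have hev := eventually_lt_of_limsup_lt hρc hbdd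
  have hc : 0 ≤ c := by
    obtain ⟨k, hk⟩ := hev.exists
    exact (Real.rpow_nonneg (ha k) _).trans hk.le
  refine (summable_geometric_of_lt_one (mul_nonneg hL hc) hLc).of_norm_bounded_eventually_nat ?_
  filter_upwards [hev, eventually_ne_atTop 0] with k hk hk0
  have hak : a k ≤ c ^ k := by
    calc a k = (a k ^ ((1 : ℝ) / k)) ^ k := by
          rw [one_div, Real.rpow_inv_natCast_pow (ha k) hk0]
      _ ≤ c ^ k := pow_le_pow_left₀ (Real.rpow_nonneg (ha k) _) hk.le k
  rw [Real.norm_of_nonneg (mul_nonneg (pow_nonneg hL k) (ha k)), mul_pow]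
  exact mul_le_mul_of_nonneg_left hak (pow_nonneg hL k)

theorem relImg_subset_relImg {X : Type*} {H : Set (X × X)}
    (htrans : ∀ t s u : X, (t, s) ∈ H → (s, u) ∈ H → (t, u) ∈ H)
    {s t : X} (h : s ∈ relImg H t) : relImg H s ⊆ relImg H t :=
  fun _ hu => htrans t s _ h hu

section CoreMap

variable {X : Type*} [MeasurableSpace X] {μ : Measure X} {H : Set (X × X)}

theorem coreIter_nonneg (μ : Measure X) (H : Set (X × X)) : ∀ k t, 0 ≤ coreIter μ H k t
  | 0, _ => zero_le_one
  | k + 1, _ => integral_nonneg fun s => coreIter_nonneg μ H k s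

theorem continuous_coreIter [TopologicalSpace X] [OpensMeasurableSpace X]
    [IsFiniteMeasureOnCompacts μ]
    (htrans : ∀ t s u : X, (t, s) ∈ H → (s, u) ∈ H → (t, u) ∈ H)
    (hcomp : ∀ t : X, IsCompact (relImg H t))
    (hsurj : (⋃ t : X, interior (relImg H t)) = Set.univ)
    (hμcont : ∀ t₀ : X, ∀ ε : ℝ≥0∞, 0 < ε → ∃ U ∈ 𝓝 t₀, ∀ t ∈ U,
      μ ((relImg H t \ relImg H t₀) ∪ (relImg H t₀ \ relImg H t)) < ε) :
    ∀ k, Continuous (coreIter μ H k)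
  | 0 => continuous_const
  | k + 1 => continuous_iff_continuousAt.2 fun t => by
    obtain ⟨u, hu⟩ := Set.mem_iUnion.1 (hsurj.symm ▸ Set.mem_univ t)
    have hsub : ∀ᶠ s in 𝓝 t, relImg H s ⊆ relImg H u :=
      eventually_of_mem (isOpen_interior.mem_nhds hu) fun s hs =>
        relImg_subset_relImg htrans (interior_subset hs)
    have hsymm : Tendsto (fun s => μ (symmDiff (relImg H s) (relImg H t))) (𝓝 t) (𝓝 0) :=
      ENNReal.tendsto_nhds_zero.2 fun ε hε => by
        obtain ⟨U, hU, hUε⟩ := hμcont t ε hε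
        exact Filter.mem_of_superset hU fun s hs => (hUε s hs).le
    exact continuousAt_setIntegral_of_tendsto_measure_symmDiff
      (continuous_coreIter htrans hcomp hsurj hμcont k) (coreIter_nonneg μ H k) (hcomp u)
      hsub hsymm

variable {t₀ : X}

theorem coreIter_le_coreIter_of_mem
    (htrans : ∀ t s u : X, (t, s) ∈ H → (s, u) ∈ H → (t, u) ∈ H)
    (hint : ∀ k, IntegrableOn (coreIter μ H k) (relImg H t₀) μ) {t : X} (ht : t ∈ relImg H t₀) :
    ∀ k, coreIter μ H k t ≤ coreIter μ H k t₀
  | 0 => le_rfl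
  | k + 1 =>
    integral_mono_measure (Measure.restrict_mono (relImg_subset_relImg htrans ht) le_rfl)
      (Eventually.of_forall (coreIter_nonneg μ H k)) (hint k)

theorem coreIter_le_measureReal_pow (hK : μ (relImg H t₀) < ∞)
    (hle : ∀ k, ∀ t ∈ relImg H t₀, coreIter μ H k t ≤ coreIter μ H k t₀) :
    ∀ k, coreIter μ H k t₀ ≤ μ.real (relImg H t₀) ^ k
  | 0 => le_of_eq (pow_zero _).symm
  | k + 1 => by
    calc coreIter μ H (k + 1) t₀ ≤ coreIter μ H k t₀ * μ.real (relImg H t₀) :=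
          (Real.le_norm_self _).trans <| norm_setIntegral_le_of_norm_le_const hK fun s hs => by
            rw [Real.norm_of_nonneg (coreIter_nonneg μ H k s)]; exact hle k s hs
      _ ≤ μ.real (relImg H t₀) ^ (k + 1) := by
        rw [pow_succ]
        gcongr
        exact coreIter_le_measureReal_pow hK hle k

end CoreMap

section NeumannSeries

variable {X : Type*} [MeasurableSpace X] {μ : Measure X} {H : Set (X × X)} {L : ℝ} {t₀ : X}

noncomputable def neumannSeries (μ : Measure X) (H : Set (X × X)) (L : ℝ) (t : X) : ℝ :=
  ∑' k, L ^ k * coreIter μ H k t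

theorem norm_pow_mul_coreIter_le (hL : 0 ≤ L)
    (hle : ∀ k, ∀ t ∈ relImg H t₀, coreIter μ H k t ≤ coreIter μ H k t₀)
    {t : X} (ht : t ∈ relImg H t₀) (k : ℕ) :
    ‖L ^ k * coreIter μ H k t‖ ≤ L ^ k * coreIter μ H k t₀ := by
  rw [Real.norm_of_nonneg (mul_nonneg (pow_nonneg hL k) (coreIter_nonneg μ H k t))]
  exact mul_le_mul_of_nonneg_left (hle k t ht) (pow_nonneg hL k)

theorem summable_pow_mul_coreIter_of_mem (hL : 0 ≤ L)
    (hle : ∀ k, ∀ t ∈ relImg H t₀, coreIter μ H k t ≤ coreIter μ H k t₀)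
    (hsum : Summable fun k => L ^ k * coreIter μ H k t₀) {t : X} (ht : t ∈ relImg H t₀) :
    Summable fun k => L ^ k * coreIter μ H k t :=
  hsum.of_norm_bounded (norm_pow_mul_coreIter_le hL hle ht)

theorem one_le_neumannSeries (hL : 0 ≤ L)
    (hle : ∀ k, ∀ t ∈ relImg H t₀, coreIter μ H k t ≤ coreIter μ H k t₀)
    (hsum : Summable fun k => L ^ k * coreIter μ H k t₀) {t : X} (ht : t ∈ relImg H t₀) :
    1 ≤ neumannSeries μ H L t := by
  simpa [neumannSeries, coreIter] using
    (summable_pow_mul_coreIter_of_mem hL hle hsum ht).le_tsum 0 fun k _ =>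
      mul_nonneg (pow_nonneg hL k) (coreIter_nonneg μ H k t)

theorem continuousOn_neumannSeries [TopologicalSpace X]
    (hcont : ∀ k, Continuous (coreIter μ H k)) (hL : 0 ≤ L)
    (hle : ∀ k, ∀ t ∈ relImg H t₀, coreIter μ H k t ≤ coreIter μ H k t₀)
    (hsum : Summable fun k => L ^ k * coreIter μ H k t₀) :
    ContinuousOn (neumannSeries μ H L) (relImg H t₀) :=
  continuousOn_tsum (fun k => (continuous_const.mul (hcont k)).continuousOn) hsum
    fun k _ ht => norm_pow_mul_coreIter_le hL hle ht k

theorem neumannSeries_eq_one_add_mul_setIntegral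
    (htrans : ∀ t s u : X, (t, s) ∈ H → (s, u) ∈ H → (t, u) ∈ H)
    (hK : μ (relImg H t₀) < ∞) (hint : ∀ k, IntegrableOn (coreIter μ H k) (relImg H t₀) μ)
    (hL : 0 ≤ L) (hle : ∀ k, ∀ t ∈ relImg H t₀, coreIter μ H k t ≤ coreIter μ H k t₀)
    (hsum : Summable fun k => L ^ k * coreIter μ H k t₀) {t : X} (ht : t ∈ relImg H t₀) :
    neumannSeries μ H L t = 1 + L * ∫ s in relImg H t, neumannSeries μ H L s ∂μ := by
  have hsub := relImg_subset_relImg htrans ht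
  have hswap : ∫ s in relImg H t, neumannSeries μ H L s ∂μ =
      ∑' k, L ^ k * coreIter μ H (k + 1) t := by
    unfold neumannSeries
    rw [setIntegral_tsum_of_norm_le ((measure_mono hsub).trans_lt hK)
      (fun k => ((hint k).mono_set hsub).const_mul _) hsum
      fun k s hs => norm_pow_mul_coreIter_le hL hle (hsub hs) k]
    simp only [integral_const_mul, coreIter]
  rw [hswap, neumannSeries, (summable_pow_mul_coreIter_of_mem hL hle hsum ht).tsum_eq_zero_add,
    ← tsum_mul_left]
  simp [coreIter, pow_succ, mul_assoc, mul_left_comm]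

end NeumannSeries

theorem linear_integral_equation_solvable_general {X : Type*} [TopologicalSpace X] [MeasurableSpace X]
    [BorelSpace X] (μ : Measure X) [μ.Regular]
    (H : Set (X × X))
    (htrans : ∀ t s u : X, (t, s) ∈ H → (s, u) ∈ H → (t, u) ∈ H)
    (hcomp : ∀ t : X, IsCompact (relImg H t))
    (hsurj : (⋃ t : X, interior (relImg H t)) = Set.univ)
    (hμcont : ∀ t₀ : X, ∀ ε : ℝ≥0∞, 0 < ε → ∃ U ∈ nhds t₀, ∀ t ∈ U,
      μ ((relImg H t \ relImg H t₀) ∪ (relImg H t₀ \ relImg H t)) < ε)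
    (L₀ : ℝ) (hL₀ : 0 ≤ L₀) (t₀ : X) (hspec : L₀ * specRad μ H t₀ < 1) :
    ∃ ℓ : X → ℝ, ContinuousOn ℓ (relImg H t₀) ∧
      (∀ t ∈ relImg H t₀, 0 < ℓ t) ∧
      (∀ t ∈ relImg H t₀, 1 ≤ ℓ t) ∧
      (∀ t ∈ relImg H t₀, ℓ t = 1 + L₀ * ∫ s in relImg H t, ℓ s ∂μ) := by
  have hK : μ (relImg H t₀) < ∞ := (hcomp t₀).measure_lt_top
  have hcont := continuous_coreIter htrans hcomp hsurj hμcont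
  have hint : ∀ k, IntegrableOn (coreIter μ H k) (relImg H t₀) μ :=
    fun k => (hcont k).integrableOn_isCompact (hcomp t₀)
  have hle : ∀ k, ∀ t ∈ relImg H t₀, coreIter μ H k t ≤ coreIter μ H k t₀ :=
    fun k _ ht => coreIter_le_coreIter_of_mem htrans hint ht k
  have hnonneg : ∀ k, 0 ≤ coreIter μ H k t₀ := fun k => coreIter_nonneg μ H k t₀
  have hsum : Summable fun k => L₀ ^ k * coreIter μ H k t₀ :=
    summable_pow_mul_of_mul_limsup_lt_one hnonneg hL₀ (isBoundedUnder_rpow_one_div_of_le_pow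
      hnonneg measureReal_nonneg (coreIter_le_measureReal_pow hK hle)) hspec
  have hone : ∀ t ∈ relImg H t₀, 1 ≤ neumannSeries μ H L₀ t :=
    fun _ ht => one_le_neumannSeries hL₀ hle hsum ht
  exact ⟨neumannSeries μ H L₀, continuousOn_neumannSeries hcont hL₀ hle hsum,
    fun t ht => one_pos.trans_le (hone t ht), hone,
    fun _ ht => neumannSeries_eq_one_add_mul_setIntegral htrans hK hint hL₀ hle hsum ht⟩

/-- Let `X` be a topological space with a Radon measure `μ` and let `H ⊆ X²` be a reflexive,
transitive, compact-valued, strongly surjective and `μ`-continuous relation. If `L₀ ≥ 0` and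
`t₀ ∈ X` satisfy `L₀ · ρ_{H,μ}(t₀) < 1`, then the integral equation
`ℓ(t) = 1 + L₀ ∫_{H(t)} ℓ(s) dμ(s)` has a continuous positive (in fact `≥ 1`) solution
on `H(t₀)`. -/
theorem linear_integral_equation_solvable {X : Type*} [TopologicalSpace X] [MeasurableSpace X]
    [BorelSpace X] (μ : Measure X) [μ.Regular]
    (H : Set (X × X))
    (hrefl : ∀ t : X, (t, t) ∈ H)
    (htrans : ∀ t s u : X, (t, s) ∈ H → (s, u) ∈ H → (t, u) ∈ H)
    (hcomp : ∀ t : X, IsCompact (relImg H t))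
    (hsurj : (⋃ t : X, interior (relImg H t)) = Set.univ)
    (hμcont : ∀ t₀ : X, ∀ ε : ℝ≥0∞, 0 < ε → ∃ U ∈ nhds t₀, ∀ t ∈ U,
      μ ((relImg H t \ relImg H t₀) ∪ (relImg H t₀ \ relImg H t)) < ε)
    (L₀ : ℝ) (hL₀ : 0 ≤ L₀) (t₀ : X) (hspec : L₀ * specRad μ H t₀ < 1) :
    ∃ ℓ : X → ℝ, ContinuousOn ℓ (relImg H t₀) ∧
      (∀ t ∈ relImg H t₀, 0 < ℓ t) ∧
      (∀ t ∈ relImg H t₀, 1 ≤ ℓ t) ∧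
      (∀ t ∈ relImg H t₀, ℓ t = 1 + L₀ * ∫ s in relImg H t, ℓ s ∂μ) :=
  linear_integral_equation_solvable_general μ H htrans hcomp hsurj hμcont L₀ hL₀ t₀ hspec
end

section
/- Let X be a compact topological space with a Radon measure μ and let B be a Banach space. Assume the continuous kernel K : X² × B → B satisfies ‖K(t,s,x) − K(t,s,y)‖ ≤ L(t,s)‖x − y‖ for all t,s ∈ X and x,y ∈ B, with a continuous function L : X² → ℝ₊. If the linear homogeneous integral inequality ∫_X L(t,s) ℓ(s) dμ(s) < ℓ(t) (for all t ∈ X) has a continuous positive solution ℓ : X → ℝ₊, then for every continuous f : X → B the nonlinear Fredholm-type equation x(t) = f(t) + ∫_X K(t,s,x(s)) dμ(s) has a unique continuous solution x : X → B. -/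
open MeasureTheory

section Aux

variable {X : Type*} [TopologicalSpace X] [CompactSpace X]
    [MeasurableSpace X] [BorelSpace X] (μ : Measure X) [IsFiniteMeasure μ]
    {B : Type*} [NormedAddCommGroup B] [NormedSpace ℝ B]

private lemma aux_integrable {h : X → B} (hh : Continuous h) : Integrable h μ :=
  hh.integrable_of_hasCompactSupport
    (IsCompact.of_isClosed_subset isCompact_univ (isClosed_tsupport h) (Set.subset_univ _))

private lemma aux_cont_integral {F : X → X → B}
    (hF : Continuous fun p : X × X => F p.1 p.2) :
    Continuous fun t => ∫ s, F t s ∂μ := by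
  have hI : LipschitzWith (μ Set.univ).toNNReal (fun u : C(X, B) => ∫ s, u s ∂μ) := by
    apply LipschitzWith.of_dist_le_mul
    intro u v
    rw [dist_eq_norm, ← integral_sub (aux_integrable μ u.continuous)
      (aux_integrable μ v.continuous)]
    calc ‖∫ s, (u s - v s) ∂μ‖ ≤ ∫ s, ‖u s - v s‖ ∂μ := norm_integral_le_integral_norm _
      _ ≤ ∫ _, dist u v ∂μ := by
          apply integral_mono ((aux_integrable μ (u.continuous.sub v.continuous)).norm)
            (integrable_const _)
          intro s
          show ‖u s - v s‖ ≤ dist u v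
          rw [← dist_eq_norm]
          exact ContinuousMap.dist_apply_le_dist s
      _ = (μ Set.univ).toReal * dist u v := by
          rw [integral_const]; simp [smul_eq_mul, Measure.real]
      _ = ((μ Set.univ).toNNReal : ℝ) * dist u v := by
          rw [ENNReal.coe_toNNReal_eq_toReal]
  have hcurry : Continuous fun t : X => (ContinuousMap.mk _ hF).curry t :=
    (ContinuousMap.mk _ hF).curry.continuous
  exact hI.continuous.comp hcurry

end Aux

/-- Fredholm-type theorem: let `X` be a compact topological space with a Radon measure `μ`
and `B` a Banach space. Assume the continuous kernel `K : X² × B → B` satisfies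
`‖K(t,s,x) − K(t,s,y)‖ ≤ L(t,s)‖x − y‖` with continuous `L : X² → ℝ₊`. If the linear
homogeneous integral inequality `∫_X L(t,s) ℓ(s) dμ(s) < ℓ(t)` has a continuous positive
solution `ℓ : X → ℝ₊`, then for every continuous `f : X → B` the nonlinear Fredholm-type
equation `x(t) = f(t) + ∫_X K(t,s,x(s)) dμ(s)` has a unique continuous solution. -/
theorem fredholm_type_unique_solution {X : Type*} [TopologicalSpace X] [CompactSpace X]
    [MeasurableSpace X] [BorelSpace X] (μ : Measure X) [μ.Regular]
    {B : Type*} [NormedAddCommGroup B] [NormedSpace ℝ B] [CompleteSpace B]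
    (K : X → X → B → B)
    (hK : Continuous (fun p : (X × X) × B => K p.1.1 p.1.2 p.2))
    (L : X → X → ℝ)
    (hLcont : Continuous (fun p : X × X => L p.1 p.2))
    (hLpos : ∀ t s : X, 0 < L t s)
    (hLip : ∀ t s : X, ∀ x y : B, ‖K t s x - K t s y‖ ≤ L t s * ‖x - y‖)
    (ℓ : X → ℝ) (hℓcont : Continuous ℓ) (hℓpos : ∀ t : X, 0 < ℓ t)
    (hineq : ∀ t : X, (∫ s, L t s * ℓ s ∂μ) < ℓ t)
    (f : X → B) (hf : Continuous f) :
    ∃! x : X → B, Continuous x ∧ ∀ t : X, x t = f t + ∫ s, K t s (x s) ∂μ := by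
  obtain hX | hX := isEmpty_or_nonempty X
  · exact ⟨f, ⟨hf, fun t => isEmptyElim t⟩, fun y _ => funext fun t => isEmptyElim t⟩
  -- min and max of ℓ
  obtain ⟨tc, -, htc⟩ := isCompact_univ.exists_isMinOn Set.univ_nonempty hℓcont.continuousOn
  obtain ⟨tC, -, htC⟩ := isCompact_univ.exists_isMaxOn Set.univ_nonempty hℓcont.continuousOn
  set c : ℝ := ℓ tc with hc_def
  set C : ℝ := ℓ tC with hC_def
  have hc : 0 < c := hℓpos tc
  have hcle : ∀ t, c ≤ ℓ t := fun t => htc (Set.mem_univ t)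
  have hCle : ∀ t, ℓ t ≤ C := fun t => htC (Set.mem_univ t)
  have hC : 0 < C := lt_of_lt_of_le hc (hcle tC |>.trans (hCle tC))
  -- the function g t = ∫ L t s * ℓ s
  set g : X → ℝ := fun t => ∫ s, L t s * ℓ s ∂μ with hg_def
  have hGcont : Continuous fun p : X × X => L p.1 p.2 * ℓ p.2 :=
    hLcont.mul (hℓcont.comp continuous_snd)
  have hgcont : Continuous g := aux_cont_integral μ hGcont
  have hgnonneg : ∀ t, 0 ≤ g t := fun t =>
    integral_nonneg fun s => (mul_pos (hLpos t s) (hℓpos s)).le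
  -- q = max of g t / ℓ t < 1
  obtain ⟨t₁, -, ht₁⟩ := isCompact_univ.exists_isMaxOn Set.univ_nonempty
    ((hgcont.div hℓcont fun t => (hℓpos t).ne').continuousOn)
  set q : ℝ := g t₁ / ℓ t₁ with hq_def
  have hq0 : 0 ≤ q := div_nonneg (hgnonneg t₁) (hℓpos t₁).le
  have hq1 : q < 1 := (div_lt_one (hℓpos t₁)).2 (hineq t₁)
  have hq : ∀ t, g t ≤ q * ℓ t := fun t => by
    have := ht₁ (Set.mem_univ t)
    calc g t = g t / ℓ t * ℓ t := (div_mul_cancel₀ _ (hℓpos t).ne').symm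
    _ ≤ q * ℓ t := mul_le_mul_of_nonneg_right this (hℓpos t).le
  -- the operator T
  have hint : ∀ x : C(X, B), Continuous fun p : X × X => K p.1 p.2 (x p.2) := fun x =>
    hK.comp (continuous_id.prodMk (x.continuous.comp continuous_snd))
  set T : C(X, B) → C(X, B) := fun x =>
    ⟨fun t => f t + ∫ s, K t s (x s) ∂μ, hf.add (aux_cont_integral μ (hint x))⟩ with hT_def
  have hTapp : ∀ (x : C(X, B)) (t : X), T x t = f t + ∫ s, K t s (x s) ∂μ := fun x t => rfl
  have hint' : ∀ (x : C(X, B)) (t : X), Integrable (fun s => K t s (x s)) μ := fun x t =>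
    aux_integrable μ ((hint x).comp (continuous_const.prodMk continuous_id))
  -- key estimate
  have key : ∀ (x y : C(X, B)) (A : ℝ), 0 ≤ A → (∀ s, ‖x s - y s‖ ≤ A * ℓ s) →
      ∀ t, ‖T x t - T y t‖ ≤ q * A * ℓ t := by
    intro x y A hA hxy t
    have h1 : T x t - T y t = ∫ s, (K t s (x s) - K t s (y s)) ∂μ := by
      rw [hTapp, hTapp, add_sub_add_left_eq_sub, integral_sub (hint' x t) (hint' y t)]
    rw [h1]
    calc ‖∫ s, (K t s (x s) - K t s (y s)) ∂μ‖
        ≤ ∫ s, ‖K t s (x s) - K t s (y s)‖ ∂μ := norm_integral_le_integral_norm _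
      _ ≤ ∫ s, A * (L t s * ℓ s) ∂μ := by
          apply integral_mono
          · exact (aux_integrable μ (((hint x).comp
              (continuous_const.prodMk continuous_id)).sub ((hint y).comp
              (continuous_const.prodMk continuous_id)))).norm
          · exact (aux_integrable μ (hGcont.comp
              (continuous_const.prodMk continuous_id))).const_mul A
          · intro s
            calc ‖K t s (x s) - K t s (y s)‖ ≤ L t s * ‖x s - y s‖ := hLip t s _ _
              _ ≤ L t s * (A * ℓ s) :=
                  mul_le_mul_of_nonneg_left (hxy s) (hLpos t s).le
              _ = A * (L t s * ℓ s) := by ring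
      _ = A * g t := integral_const_mul A _
      _ ≤ A * (q * ℓ t) := mul_le_mul_of_nonneg_left (hq t) hA
      _ = q * A * ℓ t := by ring
  -- iterate estimate
  have iter : ∀ (x y : C(X, B)) (n : ℕ) (t : X),
      ‖(T^[n] x) t - (T^[n] y) t‖ ≤ q ^ n * (dist x y / c) * ℓ t := by
    intro x y n
    induction n with
    | zero =>
      intro t
      simp only [Function.iterate_zero, id_eq, pow_zero, one_mul]
      calc ‖x t - y t‖ = dist (x t) (y t) := (dist_eq_norm _ _).symm
        _ ≤ dist x y := ContinuousMap.dist_apply_le_dist t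
        _ = dist x y / c * c := (div_mul_cancel₀ _ hc.ne').symm
        _ ≤ dist x y / c * ℓ t :=
            mul_le_mul_of_nonneg_left (hcle t) (div_nonneg dist_nonneg hc.le)
    | succ n ih =>
      intro t
      rw [Function.iterate_succ_apply', Function.iterate_succ_apply']
      have := key (T^[n] x) (T^[n] y) (q ^ n * (dist x y / c))
        (mul_nonneg (pow_nonneg hq0 n) (div_nonneg dist_nonneg hc.le)) ih t
      calc ‖T (T^[n] x) t - T (T^[n] y) t‖ ≤ q * (q ^ n * (dist x y / c)) * ℓ t := this
        _ = q ^ (n + 1) * (dist x y / c) * ℓ t := by ring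
  -- choose n with q^n * C / c < 1
  obtain ⟨n, hn⟩ : ∃ n : ℕ, q ^ n < c / C := exists_pow_lt_of_lt_one (div_pos hc hC) hq1
  have hqn : q ^ n * C / c < 1 := by
    rw [div_lt_one hc]
    calc q ^ n * C < c / C * C := by
          exact mul_lt_mul_of_pos_right hn hC
      _ = c := div_mul_cancel₀ _ hC.ne'
  have hqn0 : 0 ≤ q ^ n * C / c := div_nonneg (mul_nonneg (pow_nonneg hq0 n) hC.le) hc.le
  -- T^[n] is contracting
  have hlip : ∀ x y : C(X, B), dist (T^[n] x) (T^[n] y) ≤ (q ^ n * C / c) * dist x y := by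
    intro x y
    rw [ContinuousMap.dist_le (mul_nonneg hqn0 dist_nonneg)]
    intro t
    rw [dist_eq_norm]
    calc ‖(T^[n] x) t - (T^[n] y) t‖ ≤ q ^ n * (dist x y / c) * ℓ t := iter x y n t
      _ ≤ q ^ n * (dist x y / c) * C :=
          mul_le_mul_of_nonneg_left (hCle t)
            (mul_nonneg (pow_nonneg hq0 n) (div_nonneg dist_nonneg hc.le))
      _ = (q ^ n * C / c) * dist x y := by ring
  have hcontr : ContractingWith (Real.toNNReal (q ^ n * C / c)) (T^[n]) := by
    constructor
    · rwa [← Real.toNNReal_one, Real.toNNReal_lt_toNNReal_iff one_pos]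
    · apply LipschitzWith.of_dist_le_mul
      intro x y
      rw [Real.coe_toNNReal _ hqn0]
      exact hlip x y
  -- fixed point
  set z : C(X, B) := hcontr.fixedPoint (T^[n]) with hz_def
  have hz : Function.IsFixedPt T z := hcontr.isFixedPt_fixedPoint_iterate
  refine ⟨z, ⟨z.continuous, fun t => ?_⟩, ?_⟩
  · have := congrFun (congrArg (fun w : C(X, B) => (w : X → B)) hz) t
    exact this.symm
  · rintro y ⟨hycont, hysol⟩
    have hyfix : Function.IsFixedPt T ⟨y, hycont⟩ := by
      apply ContinuousMap.ext
      intro t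
      exact (hysol t).symm
    have : (⟨y, hycont⟩ : C(X, B)) = z :=
      hcontr.fixedPoint_unique (hyfix.iterate n)
    exact congrArg (fun w : C(X, B) => (w : X → B)) this
end

section
/- Let X be a compact topological space with a Radon measure μ and let B be a Banach space. Assume the continuous functions K : X² × B → B and L : X² → ℝ₊ satisfy ‖K(t,s,x) − K(t,s,y)‖ ≤ L(t,s)‖x − y‖ and ∫_X L(t,s) dμ(s) < 1 for all t,s ∈ X and x,y ∈ B. Then for every continuous f : X → B the nonlinear integral equation x(t) = f(t) + ∫_X K(t,s,x(s)) dμ(s) has a unique continuous solution x : X → B. -/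
/-!
The right-hand side `x ↦ f + ∫ K(·, s, x(s)) dμ(s)` maps `C(X, B)` into itself, and the
Lipschitz bound on `K` makes it Lipschitz for the sup metric with constant
`sup_t ∫ L(t, s) dμ(s)`. By compactness of `X` this supremum is attained, hence `< 1`, so the map
is a contraction of the complete space `C(X, B)` and Banach's fixed point theorem applies.
-/

open MeasureTheory Function

section Integral

variable {X : Type*} [TopologicalSpace X] [CompactSpace X] [MeasurableSpace X]
  [OpensMeasurableSpace X] (μ : Measure X) [IsFiniteMeasure μ]
  {E : Type*} [NormedAddCommGroup E]

theorem Continuous.integrable_of_compactSpace {g : X → E} (hg : Continuous g) :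
    Integrable g μ :=
  hg.integrable_of_hasCompactSupport (HasCompactSupport.of_compactSpace g)

theorem ContinuousMap.lipschitzWith_integral [NormedSpace ℝ E] :
    LipschitzWith (μ Set.univ).toNNReal (fun g : C(X, E) => ∫ s, g s ∂μ) := by
  refine LipschitzWith.of_dist_le_mul fun g h => ?_
  rw [dist_eq_norm, ← integral_sub (g.continuous.integrable_of_compactSpace μ)
    (h.continuous.integrable_of_compactSpace μ), mul_comm]
  refine norm_integral_le_of_norm_le_const (Filter.Eventually.of_forall fun s => ?_)
  rw [← dist_eq_norm]
  exact g.dist_apply_le_dist s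

theorem continuous_integral_of_continuous_uncurry [NormedSpace ℝ E] {Y : Type*}
    [TopologicalSpace Y] {g : Y → X → E} (hg : Continuous (uncurry g)) :
    Continuous fun t => ∫ s, g t s ∂μ :=
  (ContinuousMap.lipschitzWith_integral μ).continuous.comp
    (ContinuousMap.curry ⟨_, hg⟩).continuous

end Integral

theorem CompactSpace.exists_lt_forall_le {X : Type*} [TopologicalSpace X] [CompactSpace X]
    {g : X → ℝ} (hg : Continuous g) {a : ℝ} (h : ∀ t, g t < a) :
    ∃ c < a, ∀ t, g t ≤ c := by
  rcases isEmpty_or_nonempty X with hX | hX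
  · exact ⟨a - 1, by linarith, isEmptyElim⟩
  · obtain ⟨t₀, -, ht₀⟩ :=
      isCompact_univ.exists_isMaxOn Set.univ_nonempty hg.continuousOn
    exact ⟨g t₀, h t₀, fun t => ht₀ (Set.mem_univ t)⟩

theorem existsUnique_continuous_of_existsUnique_continuousMap {X Y : Type*}
    [TopologicalSpace X] [TopologicalSpace Y] {P : (X → Y) → Prop}
    (h : ∃! g : C(X, Y), P g) : ∃! x : X → Y, Continuous x ∧ P x := by
  obtain ⟨g, hg, huniq⟩ := h
  exact ⟨g, ⟨g.continuous, hg⟩,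
    fun x ⟨hx, hPx⟩ => congrArg (⇑) (huniq ⟨x, hx⟩ hPx)⟩

section FredholmOperator

variable {X : Type*} [TopologicalSpace X] [CompactSpace X] [MeasurableSpace X]
  [OpensMeasurableSpace X] (μ : Measure X) [IsFiniteMeasure μ]
  {B : Type*} [NormedAddCommGroup B] [NormedSpace ℝ B]

noncomputable def fredholmOperator (K : C((X × X) × B, B)) (f : C(X, B)) (x : C(X, B)) :
    C(X, B) where
  toFun t := f t + ∫ s, K ((t, s), x s) ∂μ
  continuous_toFun := f.continuous.add <| continuous_integral_of_continuous_uncurry μ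
    (g := fun t s => K ((t, s), x s)) (by fun_prop)

variable (K : C((X × X) × B, B)) (f : C(X, B))

theorem isFixedPt_fredholmOperator_iff (x : C(X, B)) :
    IsFixedPt (fredholmOperator μ K f) x ↔ ∀ t, x t = f t + ∫ s, K ((t, s), x s) ∂μ := by
  rw [IsFixedPt, ContinuousMap.ext_iff]
  exact forall_congr' fun t => eq_comm

theorem dist_fredholmOperator_apply_le {L : X → X → ℝ} (hL : Continuous (uncurry L))
    (hL0 : ∀ t s, 0 ≤ L t s)
    (hLip : ∀ t s x y, ‖K ((t, s), x) - K ((t, s), y)‖ ≤ L t s * ‖x - y‖)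
    (x y : C(X, B)) (t : X) :
    dist (fredholmOperator μ K f x t) (fredholmOperator μ K f y t) ≤
      (∫ s, L t s ∂μ) * dist x y := by
  have hint : ∀ z : C(X, B), Integrable (fun s => K ((t, s), z s)) μ := fun z =>
    Continuous.integrable_of_compactSpace μ (by fun_prop)
  have hLt : Integrable (L t) μ :=
    (hL.comp (Continuous.prodMk_right t)).integrable_of_compactSpace μ
  calc dist (fredholmOperator μ K f x t) (fredholmOperator μ K f y t)
      = ‖∫ s, (K ((t, s), x s) - K ((t, s), y s)) ∂μ‖ := by
        rw [dist_eq_norm, integral_sub (hint x) (hint y)]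
        exact congrArg norm (add_sub_add_left_eq_sub _ _ _)
    _ ≤ ∫ s, L t s * dist x y ∂μ :=
        norm_integral_le_of_norm_le (hLt.mul_const _) <| Filter.Eventually.of_forall fun s =>
          (hLip t s _ _).trans <| mul_le_mul_of_nonneg_left
            (by rw [← dist_eq_norm]; exact x.dist_apply_le_dist s) (hL0 t s)
    _ = (∫ s, L t s ∂μ) * dist x y := integral_mul_const _ _

theorem fredholmOperator_contractingWith {L : X → X → ℝ} (hL : Continuous (uncurry L))
    (hL0 : ∀ t s, 0 ≤ L t s)
    (hLip : ∀ t s x y, ‖K ((t, s), x) - K ((t, s), y)‖ ≤ L t s * ‖x - y‖)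
    {c : NNReal} (hc : c < 1) (hLc : ∀ t, ∫ s, L t s ∂μ ≤ c) :
    ContractingWith c (fredholmOperator μ K f) := by
  refine ⟨hc, LipschitzWith.of_dist_le_mul fun x y => ?_⟩
  rw [ContinuousMap.dist_le (by positivity)]
  exact fun t => (dist_fredholmOperator_apply_le μ K f hL hL0 hLip x y t).trans
    (mul_le_mul_of_nonneg_right (hLc t) dist_nonneg)

end FredholmOperator

/-- Corollary of the Fredholm-type theorem: if the continuous kernel `K : X² × B → B`
satisfies `‖K(t,s,x) − K(t,s,y)‖ ≤ L(t,s)‖x − y‖` with a continuous `L : X² → ℝ₊` such that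
`∫_X L(t,s) dμ(s) < 1` for all `t`, then for every continuous `f : X → B` the equation
`x(t) = f(t) + ∫_X K(t,s,x(s)) dμ(s)` has a unique continuous solution. -/
theorem fredholm_type_unique_solution_L_lt_one {X : Type*} [TopologicalSpace X] [CompactSpace X]
    [MeasurableSpace X] [BorelSpace X] (μ : Measure X) [μ.Regular]
    {B : Type*} [NormedAddCommGroup B] [NormedSpace ℝ B] [CompleteSpace B]
    (K : X → X → B → B)
    (hK : Continuous (fun p : (X × X) × B => K p.1.1 p.1.2 p.2))
    (L : X → X → ℝ)
    (hLcont : Continuous (fun p : X × X => L p.1 p.2))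
    (hLpos : ∀ t s : X, 0 < L t s)
    (hLip : ∀ t s : X, ∀ x y : B, ‖K t s x - K t s y‖ ≤ L t s * ‖x - y‖)
    (hint : ∀ t : X, (∫ s, L t s ∂μ) < 1)
    (f : X → B) (hf : Continuous f) :
    ∃! x : X → B, Continuous x ∧ ∀ t : X, x t = f t + ∫ s, K t s (x s) ∂μ := by
  obtain ⟨c, hc1, hLc⟩ :=
    CompactSpace.exists_lt_forall_le (continuous_integral_of_continuous_uncurry μ hLcont) hint
  set Φ := fredholmOperator μ ⟨_, hK⟩ ⟨f, hf⟩
  have hΦ : ContractingWith c.toNNReal Φ :=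
    fredholmOperator_contractingWith μ _ _ hLcont (fun t s => (hLpos t s).le) hLip
      (Real.toNNReal_lt_one.mpr hc1) fun t => (hLc t).trans c.le_coe_toNNReal
  have hfix (x : C(X, B)) : IsFixedPt Φ x ↔ ∀ t, x t = f t + ∫ s, K t s (x s) ∂μ :=
    isFixedPt_fredholmOperator_iff μ _ _ x
  exact existsUnique_continuous_of_existsUnique_continuousMap
    ⟨_, (hfix _).mp hΦ.fixedPoint_isFixedPt,
      fun x hx => hΦ.fixedPoint_unique ((hfix x).mpr hx)⟩
end
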